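/- A vector φ in the Barnes Wall lattice BW_n is proportionally minimal (i.e., no cφ with 0 < |c| < 1 lies in BW_n) if and only if gcd over x ∈ {0,1}^n of the Gaussian integers (1−i)^n · ⟨x̃, φ⟩ is a unit of ℤ[i]. -/

import Mathlib

/-- Generator `|x̃⟩` of the Barnes Wall lattice: the tensor product of `|0⟩`
(where `x i = false`) and `(1/(1+i))(|0⟩+|1⟩)` (where `x i = true`). -/
noncomputable def bwGen (n : ℕ) (x : Fin n → Bool) :
    EuclideanSpace ℂ (Fin n → Fin 2) :=
  WithLp.toLp 2 (fun y => ∏ i : Fin n,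
    (if x i then (1 + Complex.I)⁻¹ else if y i = 0 then 1 else 0))

/-- Membership in the Barnes Wall lattice `BW_n`: the `ℤ[i]`-span of the `bwGen n x`. -/
def memBW (n : ℕ) (v : EuclideanSpace ℂ (Fin n → Fin 2)) : Prop :=
  ∃ a : (Fin n → Bool) → GaussianInt,
    v = ∑ x : Fin n → Bool, (GaussianInt.toComplex (a x)) • bwGen n x


/-!
The scaled Gram matrix `G x y = (1 - i)^n ⟨x̃, ỹ⟩` is the `n`-th Kronecker power of a `2 × 2`
Gaussian-integer matrix of determinant `-i`, so it is invertible over `ℤ[i]`. Hence a vector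
`v = ∑ β y • ỹ` lies in `BW_n` iff its dual coordinates `(1 - i)^n ⟨x̃, v⟩ = (G β) x` are all
Gaussian integers, and `c • φ ∈ BW_n` iff `c * a x ∈ ℤ[i]` for all `x`. A non-unit common
divisor `p` of the `a x` gives `c = p⁻¹` (or `c = 1/2` if `p = 0`). Conversely, if the `a x`
have no non-unit common divisor, Bézout writes `c = ∑ u x * (c * a x) ∈ ℤ[i]`, so `‖c‖ ≥ 1`.
-/

open Complex ComplexConjugate GaussianInt Matrix

namespace Matrix

variable {m R : Type*} [CommSemiring R]

def kroneckerPow (A : Matrix m m R) (ι : Type*) [Fintype ι] : Matrix (ι → m) (ι → m) R :=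
  of fun x y => ∏ i, A (x i) (y i)

theorem kroneckerPow_mul {ι : Type*} [Fintype ι] [DecidableEq ι] [Fintype m]
    (A B : Matrix m m R) : A.kroneckerPow ι * B.kroneckerPow ι = (A * B).kroneckerPow ι := by
  ext x z
  simp only [kroneckerPow, mul_apply, of_apply, Finset.prod_univ_sum, Fintype.piFinset_univ,
    Finset.prod_mul_distrib]

theorem kroneckerPow_one {ι : Type*} [Fintype ι] [DecidableEq m] :
    (1 : Matrix m m R).kroneckerPow ι = 1 := by
  ext x y
  by_cases hxy : x = y
  · subst hxy; simp [kroneckerPow]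
  · obtain ⟨i, hi⟩ := Function.ne_iff.mp hxy
    rw [one_apply_ne hxy]
    exact Finset.prod_eq_zero (Finset.mem_univ i) (one_apply_ne hi)

end Matrix

theorem Ideal.span_range_eq_top_of_forall_dvd_isUnit {ι R : Type*} [CommRing R]
    [IsPrincipalIdealRing R] (a : ι → R) (h : ∀ p, (∀ i, p ∣ a i) → IsUnit p) :
    Ideal.span (Set.range a) = ⊤ := by
  rw [← Submodule.IsPrincipal.span_singleton_generator (Ideal.span (Set.range a)), ← Ideal.span,
    Ideal.span_singleton_eq_top]
  exact h _ fun i => Submodule.IsPrincipal.dvd_generator_span_iff.mp dvd_rfl _ ⟨i, rfl⟩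

namespace GaussianInt

theorem sq_norm_toComplex (z : GaussianInt) : ‖(z : ℂ)‖ ^ 2 = z.norm := by
  rw [Complex.sq_norm, intCast_real_norm]

theorem one_le_norm_of_mem_range {z : ℂ} (hz : z ∈ toComplex.range) (h0 : z ≠ 0) : 1 ≤ ‖z‖ := by
  obtain ⟨g, rfl⟩ := hz
  rw [← one_le_sq_iff₀ (_root_.norm_nonneg _), sq_norm_toComplex]
  exact_mod_cast norm_pos.mpr (by rintro rfl; exact h0 toComplex_zero)

theorem one_lt_norm_toComplex {z : GaussianInt} (h0 : z ≠ 0) (hu : ¬IsUnit z) : 1 < ‖(z : ℂ)‖ := by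
  rw [← one_lt_sq_iff₀ (_root_.norm_nonneg _), sq_norm_toComplex]
  have hnorm_ne_one : z.norm ≠ 1 := fun h => hu ((Zsqrtd.norm_eq_one_iff' (by norm_num) z).mp h)
  exact_mod_cast lt_of_le_of_ne (norm_pos.mpr h0) hnorm_ne_one.symm

theorem mem_range_of_forall_mul_mem_range {ι : Type*} {a : ι → GaussianInt}
    (ha : ∀ p, (∀ i, p ∣ a i) → IsUnit p) {c : ℂ} (hc : ∀ i, c * a i ∈ toComplex.range) :
    c ∈ toComplex.range := by
  have h1 : (1 : GaussianInt) ∈ Ideal.span (Set.range a) := by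
    rw [Ideal.span_range_eq_top_of_forall_dvd_isUnit a ha]; trivial
  simpa using Submodule.span_induction (p := fun (g : GaussianInt) _ => c * g ∈ toComplex.range)
    (by rintro _ ⟨i, rfl⟩; exact hc i) (by simp)
    (fun g h _ _ hg hh => by rw [toComplex_add, mul_add]; exact add_mem hg hh)
    (fun g h _ hh => by rw [smul_eq_mul, toComplex_mul, mul_left_comm]; exact mul_mem ⟨g, rfl⟩ hh) h1

theorem exists_mul_mem_range_of_forall_dvd {ι : Type*} {a : ι → GaussianInt} {p : GaussianInt}
    (hu : ¬IsUnit p) (hp : ∀ i, p ∣ a i) :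
    ∃ c : ℂ, c ≠ 0 ∧ ‖c‖ < 1 ∧ ∀ i, c * a i ∈ toComplex.range := by
  rcases eq_or_ne p 0 with rfl | hp0
  · refine ⟨1 / 2, by norm_num, by norm_num, fun i => ?_⟩
    rw [zero_dvd_iff.mp (hp i), toComplex_zero, mul_zero]
    exact zero_mem _
  · have hp0' : (p : ℂ) ≠ 0 := toComplex_eq_zero.not.mpr hp0
    refine ⟨(p : ℂ)⁻¹, inv_ne_zero hp0', ?_, fun i => ?_⟩
    · rw [norm_inv]
      exact inv_lt_one_of_one_lt₀ (one_lt_norm_toComplex hp0 hu)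
    · obtain ⟨q, hq⟩ := hp i
      rw [hq, toComplex_mul, inv_mul_cancel_left₀ hp0']
      exact ⟨q, rfl⟩

theorem no_small_multiplier_iff_forall_dvd_isUnit {ι : Type*} (a : ι → GaussianInt) :
    (∀ c : ℂ, c ≠ 0 → ‖c‖ < 1 → ¬ ∀ i, c * a i ∈ toComplex.range) ↔
      ∀ p, (∀ i, p ∣ a i) → IsUnit p := by
  refine ⟨fun h p hp => ?_, fun h c hc0 hc1 hc => ?_⟩
  · by_contra hu
    obtain ⟨c, hc0, hc1, hc⟩ := exists_mul_mem_range_of_forall_dvd hu hp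
    exact h c hc0 hc1 hc
  · exact hc1.not_ge (one_le_norm_of_mem_range (mem_range_of_forall_mul_mem_range h hc) hc0)

end GaussianInt

/-- The tensor factors of `bwGen`: `bwGen n x y = ∏ i, bwGenFactor (x i) (y i)`. -/
noncomputable def bwGenFactor (s : Bool) (w : Fin 2) : ℂ :=
  if s then (1 + I)⁻¹ else if w = 0 then 1 else 0

def bwGramFactor : Matrix Bool Bool GaussianInt :=
  Matrix.of fun
    | false, false => ⟨1, -1⟩
    | false, true => ⟨0, -1⟩
    | true, false => 1
    | true, true => ⟨1, -1⟩

def bwGramFactorInv : Matrix Bool Bool GaussianInt :=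
  Matrix.of fun
    | false, false => ⟨1, 1⟩
    | false, true => ⟨-1, 0⟩
    | true, false => ⟨0, -1⟩
    | true, true => ⟨1, 1⟩

theorem bwGramFactorInv_mul : bwGramFactorInv * bwGramFactor = 1 :=
  Matrix.ext fun s t => by cases s <;> cases t <;> decide

theorem bwGramFactor_eq (s t : Bool) :
    (1 - I) * ∑ w, conj (bwGenFactor s w) * bwGenFactor t w = bwGramFactor s t := by
  have hinv : (1 + I)⁻¹ = (1 - I) / 2 := by
    apply inv_eq_of_mul_eq_one_right; ring_nf; rw [I_sq]; ring
  cases s <;> cases t <;>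
    simp only [bwGenFactor, bwGramFactor, of_apply, hinv, Bool.false_eq_true, ↓reduceIte, Fin.isValue,
      Fin.sum_univ_two, one_ne_zero, map_div₀, map_sub, map_one, map_zero, map_ofNat, conj_I,
      toComplex_def', Int.cast_zero, Int.cast_one, Int.cast_neg]
  all_goals ring_nf
  all_goals simp only [I_sq, I_pow_three]; ring

/-- The pairing `⟨(1 + i)^n x̃, v⟩` of `v` with a generator of the dual lattice
`BW_n* = (1 + i)^n BW_n`. -/
noncomputable def bwCoord (n : ℕ) (v : EuclideanSpace ℂ (Fin n → Fin 2)) (x : Fin n → Bool) : ℂ :=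
  (1 - I) ^ n * inner ℂ (bwGen n x) v

def bwGram (n : ℕ) : Matrix (Fin n → Bool) (Fin n → Bool) GaussianInt :=
  bwGramFactor.kroneckerPow (Fin n)

def bwGramInv (n : ℕ) : Matrix (Fin n → Bool) (Fin n → Bool) GaussianInt :=
  bwGramFactorInv.kroneckerPow (Fin n)

theorem bwGramInv_mul_bwGram (n : ℕ) : bwGramInv n * bwGram n = 1 := by
  rw [bwGramInv, bwGram, Matrix.kroneckerPow_mul, bwGramFactorInv_mul, Matrix.kroneckerPow_one]

theorem bwCoord_bwGen (n : ℕ) (x y : Fin n → Bool) : bwCoord n (bwGen n y) x = bwGram n x y := by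
  have hinner : inner ℂ (bwGen n x) (bwGen n y)
      = ∏ i, ∑ w, conj (bwGenFactor (x i) w) * bwGenFactor (y i) w := by
    simp only [Finset.prod_univ_sum, Fintype.piFinset_univ, PiLp.inner_apply, RCLike.inner_apply',
      bwGen, map_prod, ← Finset.prod_mul_distrib]
    rfl
  rw [bwCoord, hinner, ← Fin.prod_const, ← Finset.prod_mul_distrib, bwGram,
    Matrix.kroneckerPow, Matrix.of_apply, map_prod]
  exact Finset.prod_congr rfl fun i _ => bwGramFactor_eq (x i) (y i)

theorem bwCoord_smul (n : ℕ) (c : ℂ) (v : EuclideanSpace ℂ (Fin n → Fin 2)) (x : Fin n → Bool) :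
    bwCoord n (c • v) x = c * bwCoord n v x := by
  rw [bwCoord, bwCoord, inner_smul_right, mul_left_comm]

theorem bwCoord_sum_smul (n : ℕ) (β : (Fin n → Bool) → ℂ) (x : Fin n → Bool) :
    bwCoord n (∑ y, β y • bwGen n y) x = ((bwGram n).map toComplex *ᵥ β) x := by
  simp only [mulVec, dotProduct, map_apply, bwCoord, inner_sum, inner_smul_right, Finset.mul_sum]
  refine Finset.sum_congr rfl fun y _ => ?_
  rw [← bwCoord_bwGen, bwCoord]
  ring

theorem memBW.bwCoord_mem_range {n : ℕ} {v : EuclideanSpace ℂ (Fin n → Fin 2)} (hv : memBW n v)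
    (x : Fin n → Bool) : bwCoord n v x ∈ toComplex.range := by
  obtain ⟨b, rfl⟩ := hv
  rw [bwCoord_sum_smul]
  exact ⟨_, RingHom.map_mulVec _ _ _ _⟩

theorem memBW_sum_smul_iff (n : ℕ) (β : (Fin n → Bool) → ℂ) :
    memBW n (∑ y, β y • bwGen n y) ↔ ∀ x, bwCoord n (∑ y, β y • bwGen n y) x ∈ toComplex.range := by
  refine ⟨memBW.bwCoord_mem_range, fun h => ?_⟩
  choose a ha using h
  have hβ : β = toComplex ∘ (bwGramInv n *ᵥ a) := by
    have hGβ : toComplex ∘ a = (bwGram n).map toComplex *ᵥ β := funext fun x => by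
      rw [Function.comp_apply, ha, bwCoord_sum_smul]
    funext y
    rw [Function.comp_apply, RingHom.map_mulVec, hGβ, Matrix.mulVec_mulVec, ← Matrix.map_mul,
      bwGramInv_mul_bwGram, Matrix.map_one _ toComplex_zero toComplex_one, Matrix.one_mulVec]
  exact ⟨bwGramInv n *ᵥ a, by rw [hβ]; rfl⟩

theorem memBW_smul_iff {n : ℕ} {φ : EuclideanSpace ℂ (Fin n → Fin 2)} (hφ : memBW n φ) (c : ℂ) :
    memBW n (c • φ) ↔ ∀ x, c * bwCoord n φ x ∈ toComplex.range := by
  obtain ⟨b, rfl⟩ := hφ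
  simp only [← bwCoord_smul, Finset.smul_sum, smul_smul]
  exact memBW_sum_smul_iff n _

theorem stmt_12 (n : ℕ) (φ : EuclideanSpace ℂ (Fin n → Fin 2))
    (hφ : memBW n φ)
    (a : (Fin n → Bool) → GaussianInt)
    (ha : ∀ x, GaussianInt.toComplex (a x) =
      (1 - Complex.I) ^ n * (inner ℂ (bwGen n x) φ : ℂ)) :
    (∀ c : ℂ, c ≠ 0 → ‖c‖ < 1 → ¬ memBW n (c • φ)) ↔
      (∀ p : GaussianInt, (∀ x, p ∣ a x) → IsUnit p) := by
  have hcoord : ∀ x, bwCoord n φ x = a x := fun x => (ha x).symm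
  simp only [memBW_smul_iff hφ, hcoord]
  exact GaussianInt.no_small_multiplier_iff_forall_dvd_isUnit a
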